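/- arXiv:2001.09115 — 6 statements merged into one kernel-verified Lean document; each statement's English description precedes it below -/
import Mathlib

section
/- Let A and B be d×d complex matrices. (i) ‖AB‖ = ‖ |A| |Bᴴ| ‖. (ii) If in addition A and B are normal matrices, then ‖AB‖ = ‖ |Aᴴ| |B| ‖. -/
open scoped Matrix.Norms.L2Operator Matrix ComplexOrder

/-- The absolute value `|X| = (Xᴴ X)^{1/2}` of a complex square matrix. -/
noncomputable def matAbsC {d : ℕ} (X : Matrix (Fin d) (Fin d) ℂ) : Matrix (Fin d) (Fin d) ℂ :=
  (Matrix.posSemidef_conjTranspose_mul_self X).1.eigenvectorUnitary.1 *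
    Matrix.diagonal ((↑) ∘ Real.sqrt ∘ (Matrix.posSemidef_conjTranspose_mul_self X).1.eigenvalues) *
    (star (Matrix.posSemidef_conjTranspose_mul_self X).1.eigenvectorUnitary : Matrix (Fin d) (Fin d) ℂ)

/-!
By the C⋆-identity, `‖a b‖² = ‖b⋆ (a⋆ a) b‖` depends on `a` only through `a⋆ a = |a|²`, so `a` may
be replaced by `|a|`; taking adjoints, `b` may likewise be replaced by `|b⋆|`. For a normal `a`,
`|a⋆| = |a|`. The matrix statement follows once `matAbsC` is identified with the absolute value
given by the continuous functional calculus of the C⋆-algebra of matrices.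
-/

open scoped MatrixOrder

namespace CFC

variable {A : Type*} [CStarAlgebra A] [PartialOrder A] [StarOrderedRing A]

theorem norm_abs_mul (a b : A) : ‖abs a * b‖ = ‖a * b‖ := by
  have h : ‖star (abs a * b) * (abs a * b)‖ = ‖star (a * b) * (a * b)‖ := by
    simp only [star_mul, (abs_nonneg a).isSelfAdjoint.star_eq, mul_assoc,
      ← mul_assoc (abs a), abs_mul_abs]
  simpa only [CStarRing.norm_star_mul_self, mul_self_inj (norm_nonneg _) (norm_nonneg _)] using h

theorem norm_mul_abs_star (a b : A) : ‖a * abs (star b)‖ = ‖a * b‖ := by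
  rw [← norm_star, star_mul, (abs_nonneg _).isSelfAdjoint.star_eq, norm_abs_mul, ← star_mul,
    norm_star]

end CFC

theorem matAbsC_eq_cfcAbs {d : ℕ} (X : Matrix (Fin d) (Fin d) ℂ) : matAbsC X = CFC.abs X := by
  rw [CFC.abs, CFC.sqrt_eq_real_sqrt _ (star_mul_self_nonneg X), cfcₙ_eq_cfc,
    Matrix.star_eq_conjTranspose, (Matrix.posSemidef_conjTranspose_mul_self X).1.cfc_eq]
  rfl

/-- **Norm identities** (Lemma 3.3). For `d×d` complex matrices `A`, `B`:
(i) `‖A B‖ = ‖|A| |Bᴴ|‖`; (ii) if `A` and `B` are normal, `‖A B‖ = ‖|Aᴴ| |B|‖`.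
`‖·‖` is the operator norm. -/
theorem norm_identities (d : ℕ) (A B : Matrix (Fin d) (Fin d) ℂ) :
    ‖A * B‖ = ‖matAbsC A * matAbsC Bᴴ‖ ∧
      (A * Aᴴ = Aᴴ * A → B * Bᴴ = Bᴴ * B → ‖A * B‖ = ‖matAbsC Aᴴ * matAbsC B‖) := by
  simp only [matAbsC_eq_cfcAbs, ← Matrix.star_eq_conjTranspose]
  have h_abs : ‖A * B‖ = ‖CFC.abs A * CFC.abs (star B)‖ := by
    rw [CFC.norm_mul_abs_star, CFC.norm_abs_mul]
  refine ⟨h_abs, fun hA hB => ?_⟩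
  have : IsStarNormal A := ⟨hA.symm⟩
  have : IsStarNormal B := ⟨hB.symm⟩
  rw [h_abs, CFC.abs_star A, CFC.abs_star B]
end

section
/- Let p ≥ 1 be an integer and let v : ℤ → ℝ be a bounded function with v_n = 0 for all integers n with 1 ≤ n ≤ p. Let H be the bounded self-adjoint operator on ℓ²(ℤ) defined by (Hψ)_n = ψ_{n+1} + ψ_{n−1} + v_n ψ_n. Then for every integer k with 1 ≤ k ≤ p, dist(2cos(πk/(p+1)), spectrum(H)) ≤ 18 k / p^{3/2}. -/
/-!
With `θ = π k / (p + 1)`, the vector `ψₙ = sin (n θ)` on the sites `1, …, p` solves the free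
equation `ψₙ₊₁ + ψₙ₋₁ = 2 cos θ ψₙ` there, and vanishes at `0` and `p + 1`. Since `v` vanishes on
these sites, `(H - 2 cos θ) ψ` is supported on `{0, p + 1}`, where it equals `sin θ` and
`sin (p θ) = ± sin θ`; meanwhile `‖ψ‖² = (p + 1) / 2`. For a normal operator the resolvent at `z`
has norm `1 / dist (z, σ(H))` (continuous functional calculus), so
`dist (2 cos θ, σ(H)) ≤ ‖(H - 2 cos θ) ψ‖ / ‖ψ‖ = 2 sin θ / √(p + 1) ≤ 2 π k / (p + 1) ^ (3 / 2)`.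
-/

open Real Finset Metric

theorem IsStarNormal.norm_resolvent_le {A : Type*} [CStarAlgebra A] (a : A) [IsStarNormal a]
    {z : ℂ} (hz : 0 < infDist z (spectrum ℂ a)) :
    ‖resolvent a z‖ ≤ (infDist z (spectrum ℂ a))⁻¹ := by
  have hz' : ∀ x ∈ spectrum ℂ a, z - x ≠ 0 := fun x hx h =>
    hz.ne' (infDist_zero_of_mem (sub_eq_zero.mp h ▸ hx))
  have hres : resolvent a z = cfc (fun x => (z - x)⁻¹) a := by
    rw [cfc_inv (fun x => z - x) a hz', cfc_sub (fun _ => z) (fun x => x) a, cfc_const z a,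
      cfc_id' ℂ a]
    rfl
  rw [hres]
  refine norm_cfc_le (by positivity) fun x hx => ?_
  rw [norm_inv, ← dist_eq_norm]
  exact inv_anti₀ hz (infDist_le_dist_of_mem hx)

theorem ContinuousLinearMap.infDist_spectrum_mul_norm_le {E : Type*} [NormedAddCommGroup E]
    [InnerProductSpace ℂ E] [CompleteSpace E] (H : E →L[ℂ] E) [IsStarNormal H] (z : ℂ) (ψ : E) :
    infDist z (spectrum ℂ H) * ‖ψ‖ ≤ ‖H ψ - z • ψ‖ := by
  rcases (infDist_nonneg (x := z) (s := spectrum ℂ H)).eq_or_lt with hd | hd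
  · rw [← hd, zero_mul]; positivity
  have hunit : IsUnit (algebraMap ℂ _ z - H) :=
    spectrum.notMem_iff.mp fun h => hd.ne' (infDist_zero_of_mem h)
  have hψ : resolvent H z (z • ψ - H ψ) = ψ := by
    have h := congr($(Ring.inverse_mul_cancel _ hunit) ψ)
    simpa [resolvent, Algebra.algebraMap_eq_smul_one] using h
  calc infDist z (spectrum ℂ H) * ‖ψ‖
      ≤ infDist z (spectrum ℂ H) * (‖resolvent H z‖ * ‖z • ψ - H ψ‖) := by
        grw [← (resolvent H z).le_opNorm, hψ]
    _ ≤ infDist z (spectrum ℂ H) * ((infDist z (spectrum ℂ H))⁻¹ * ‖z • ψ - H ψ‖) := by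
        grw [IsStarNormal.norm_resolvent_le H hd]
    _ = ‖H ψ - z • ψ‖ := by rw [norm_sub_rev, ← mul_assoc, mul_inv_cancel₀ hd.ne', one_mul]

theorem lp.norm_sq_eq_sum_of_support_subset {ι : Type*} {E : ι → Type*}
    [∀ i, NormedAddCommGroup (E i)] (f : lp E 2) {s : Finset ι} (hf : ∀ i ∉ s, f i = 0) :
    ‖f‖ ^ 2 = ∑ i ∈ s, ‖f i‖ ^ 2 := by
  have h := lp.norm_rpow_eq_tsum (by norm_num : 0 < (2 : ENNReal).toReal) f
  simp only [ENNReal.toReal_ofNat, Real.rpow_two] at h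
  rw [h, tsum_eq_sum fun i hi => by simp [hf i hi]]

theorem Real.four_mul_sin_mul_sum_range_sin_sq (θ : ℝ) (N : ℕ) :
    4 * sin θ * ∑ n ∈ range N, sin (n * θ) ^ 2 = 2 * N * sin θ - sin ((2 * N - 1) * θ) - sin θ := by
  induction N with
  | zero => simp [neg_mul, sin_neg]
  | succ N ih =>
    rw [sum_range_succ, mul_add, ih]
    have h₁ : (2 * ((N + 1 : ℕ) : ℝ) - 1) * θ = 2 * (N * θ) + θ := by push_cast; ring
    have h₂ : (2 * (N : ℝ) - 1) * θ = 2 * (N * θ) - θ := by ring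
    rw [h₁, h₂, sin_add, sin_sub, cos_two_mul, sin_two_mul]
    push_cast
    linear_combination 4 * sin θ * sin_sq_add_cos_sq (N * θ)

theorem Real.sum_range_sin_sq_of_sin_eq_zero {θ : ℝ} {N : ℕ} (hθ : sin θ ≠ 0)
    (hN : sin (N * θ) = 0) : ∑ n ∈ range N, sin (n * θ) ^ 2 = N / 2 := by
  have h := four_mul_sin_mul_sum_range_sin_sq θ N
  have h' : (2 * (N : ℝ) - 1) * θ = 2 * (N * θ) - θ := by ring
  rw [h', sin_sub, cos_two_mul, sin_two_mul, cos_sq', hN] at h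
  field_simp
  apply mul_left_cancel₀ hθ
  linear_combination h / 2

theorem Real.sin_sub_sq_of_sin_eq_zero {x : ℝ} (θ : ℝ) (hx : sin x = 0) :
    sin (x - θ) ^ 2 = sin θ ^ 2 := by
  have hcos : cos x ^ 2 = 1 := by rw [← sin_sq_add_cos_sq x, hx]; ring
  rw [sin_sub, hx]
  linear_combination sin θ ^ 2 * hcos


local notation "ℓ²" => lp (fun _ : ℤ => ℂ) 2

def IsSchrodingerOperator (v : ℤ → ℝ) (H : ℓ² →L[ℂ] ℓ²) : Prop :=
  ∀ ψ : ℓ², ∀ n : ℤ, (H ψ : ℤ → ℂ) n = ψ (n + 1) + ψ (n - 1) + (v n : ℂ) * ψ n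

/-- If `sin ((p + 1) * θ) = 0`, this is the Dirichlet eigenvector of the free Laplacian on the
sites `1, …, p`, with eigenvalue `2 * cos θ`. -/
noncomputable def sineWave (p : ℕ) (θ : ℝ) : ℓ² :=
  ⟨(Icc 1 (p : ℤ) : Set ℤ).indicator fun n => (sin (n * θ) : ℂ),
    (memℓp_zero ((Icc 1 (p : ℤ)).finite_toSet.subset Set.support_indicator_subset)).of_exponent_ge
      zero_le⟩

section sineWave

variable {p : ℕ} {θ : ℝ}

theorem coe_sineWave :
    ⇑(sineWave p θ) = (Icc 1 (p : ℤ) : Set ℤ).indicator fun n => (sin (n * θ) : ℂ) :=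
  rfl

theorem sineWave_apply_of_notMem {n : ℤ} (hn : n ∉ Icc 1 (p : ℤ)) : sineWave p θ n = 0 := by
  rw [coe_sineWave, Set.indicator_of_notMem (mem_coe.not.mpr hn)]

theorem sineWave_apply_of_mem (hN : sin ((p + 1) * θ) = 0) {n : ℤ} (h₀ : 0 ≤ n)
    (h₁ : n ≤ p + 1) : sineWave p θ n = sin (n * θ) := by
  by_cases hn : n ∈ Icc 1 (p : ℤ)
  · rw [coe_sineWave, Set.indicator_of_mem (mem_coe.mpr hn)]
  rw [sineWave_apply_of_notMem hn]
  obtain rfl | rfl : n = 0 ∨ n = p + 1 := by rw [mem_Icc] at hn; omega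
  · simp
  · rw [Int.cast_add, Int.cast_natCast, Int.cast_one, hN, Complex.ofReal_zero]

theorem norm_sineWave_sq (hθ : sin θ ≠ 0) (hN : sin ((p + 1) * θ) = 0) :
    ‖sineWave p θ‖ ^ 2 = (p + 1) / 2 := by
  have hsupp : ∀ n ∉ (range (p + 1)).map Nat.castEmbedding, sineWave p θ n = 0 := by
    intro n hn
    refine sineWave_apply_of_notMem fun h => hn ?_
    rw [mem_Icc] at h
    exact mem_map.mpr ⟨n.toNat, by rw [mem_range]; omega, by simp; omega⟩
  rw [lp.norm_sq_eq_sum_of_support_subset _ hsupp, sum_map]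
  have hN' : sin ((p + 1 : ℕ) * θ) = 0 := by push_cast; exact hN
  rw [← Nat.cast_add_one, ← sum_range_sin_sq_of_sin_eq_zero hθ hN']
  refine sum_congr rfl fun n hn => ?_
  rw [mem_range] at hn
  rw [Nat.castEmbedding_apply, sineWave_apply_of_mem hN (by positivity) (by omega),
    Complex.norm_real, norm_eq_abs, sq_abs, Int.cast_natCast]

theorem sineWave_residual_apply {v : ℤ → ℝ} {H : ℓ² →L[ℂ] ℓ²} (hH : IsSchrodingerOperator v H)
    (hv0 : ∀ n : ℤ, 1 ≤ n → n ≤ (p : ℤ) → v n = 0) (hN : sin ((p + 1) * θ) = 0) (n : ℤ) :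
    (H (sineWave p θ) - ((2 * cos θ : ℝ) : ℂ) • sineWave p θ) n =
      if n = 0 then (sin θ : ℂ) else if n = p + 1 then (sin (p * θ) : ℂ) else 0 := by
  rw [lp.coeFn_sub, lp.coeFn_smul, Pi.sub_apply, Pi.smul_apply, smul_eq_mul, hH]
  have hval := fun m h₀ h₁ => sineWave_apply_of_mem (p := p) (θ := θ) hN (n := m) h₀ h₁
  have hzero := fun m h => sineWave_apply_of_notMem (p := p) (θ := θ) (n := m) h
  obtain h | rfl | ⟨h₁, h₂⟩ | rfl | h :
      n < 0 ∨ n = 0 ∨ (1 ≤ n ∧ n ≤ p) ∨ n = p + 1 ∨ p + 1 < n := by omega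
  · rw [hzero (n + 1) (by simp; omega), hzero (n - 1) (by simp; omega), hzero n (by simp; omega),
      if_neg h.ne, if_neg (by omega)]
    ring
  · rw [zero_add, zero_sub, hval 1 (by omega) (by omega), hzero (-1) (by simp),
      hzero 0 (by simp), if_pos rfl]
    simp
  · rw [hval (n + 1) (by omega) (by omega), hval (n - 1) (by omega) (by omega),
      hval n (by omega) (by omega), hv0 n h₁ h₂, if_neg (by omega), if_neg (by omega)]
    have key : Complex.sin ((n + 1) * θ) + Complex.sin ((n - 1) * θ) =
        2 * Complex.cos θ * Complex.sin (n * θ) := by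
      rw [add_mul, sub_mul, one_mul, Complex.sin_add, Complex.sin_sub]; ring
    push_cast
    linear_combination key
  · rw [add_sub_cancel_right, hzero (p + 1 + 1) (by simp), hval p (by omega) (by omega),
      hzero (p + 1) (by simp), if_neg (by omega), if_pos rfl, Int.cast_natCast]
    ring
  · rw [hzero (n + 1) (by simp; omega), hzero (n - 1) (by simp; omega), hzero n (by simp; omega),
      if_neg (by omega), if_neg h.ne']
    ring

theorem norm_sineWave_residual_sq {v : ℤ → ℝ} {H : ℓ² →L[ℂ] ℓ²}
    (hH : IsSchrodingerOperator v H) (hv0 : ∀ n : ℤ, 1 ≤ n → n ≤ (p : ℤ) → v n = 0)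
    (hN : sin ((p + 1) * θ) = 0) :
    ‖H (sineWave p θ) - ((2 * cos θ : ℝ) : ℂ) • sineWave p θ‖ ^ 2 = 2 * sin θ ^ 2 := by
  have hsupp : ∀ n ∉ ({0, (p : ℤ) + 1} : Finset ℤ),
      (H (sineWave p θ) - ((2 * cos θ : ℝ) : ℂ) • sineWave p θ) n = 0 := by
    intro n hn
    rw [mem_insert, mem_singleton, not_or] at hn
    rw [sineWave_residual_apply hH hv0 hN, if_neg hn.1, if_neg hn.2]
  rw [lp.norm_sq_eq_sum_of_support_subset _ hsupp, sum_pair (by omega),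
    sineWave_residual_apply hH hv0 hN, sineWave_residual_apply hH hv0 hN, if_pos rfl,
    if_neg (by omega), if_pos rfl, Complex.norm_real, Complex.norm_real, norm_eq_abs, norm_eq_abs,
    sq_abs, sq_abs, show (p : ℝ) * θ = (p + 1) * θ - θ by ring, sin_sub_sq_of_sin_eq_zero θ hN]
  ring

end sineWave

theorem le_eighteen_mul_div_rpow_of_sq_mul_le {p k d : ℝ} (hp : 0 < p) (hk : 0 ≤ k) (hd : 0 ≤ d)
    (h : d ^ 2 * (p + 1) ≤ 4 * (π * k / (p + 1)) ^ 2) : d ≤ 18 * k / p ^ (3 / 2 : ℝ) := by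
  have hp32 : (p ^ (3 / 2 : ℝ)) ^ 2 = p ^ 3 := by
    rw [← rpow_natCast, ← rpow_mul hp.le]; norm_num
  have h' : d ^ 2 * (p + 1) ^ 3 ≤ 4 * π ^ 2 * k ^ 2 := by
    rw [div_pow, mul_div_assoc', le_div_iff₀ (by positivity)] at h
    linear_combination h
  rw [← pow_le_pow_iff_left₀ hd (by positivity) two_ne_zero, div_pow, hp32,
    le_div_iff₀ (by positivity)]
  calc d ^ 2 * p ^ 3 ≤ d ^ 2 * (p + 1) ^ 3 := by gcongr; linarith
    _ ≤ 4 * π ^ 2 * k ^ 2 := h'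
    _ ≤ 4 * 4 ^ 2 * k ^ 2 := by gcongr; exact pi_le_four
    _ ≤ (18 * k) ^ 2 := by nlinarith

theorem spectral_information_general (p : ℕ) (v : ℤ → ℝ)
    (hv0 : ∀ n : ℤ, 1 ≤ n → n ≤ (p : ℤ) → v n = 0)
    (H : lp (fun _ : ℤ => ℂ) 2 →L[ℂ] lp (fun _ : ℤ => ℂ) 2)
    (hH : ∀ ψ : lp (fun _ : ℤ => ℂ) 2, ∀ n : ℤ,
      (H ψ : ∀ _ : ℤ, ℂ) n = ψ (n + 1) + ψ (n - 1) + (v n : ℂ) * ψ n)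
    (hsa : IsSelfAdjoint H) :
    ∀ k : ℕ, 1 ≤ k → k ≤ p →
      Metric.infDist ((2 * Real.cos (Real.pi * k / (p + 1)) : ℝ) : ℂ) (spectrum ℂ H) ≤
        18 * k / (p : ℝ) ^ ((3 : ℝ) / 2) := by
  intro k hk1 hkp
  set θ := π * k / (p + 1)
  have hθπ : θ < π := by
    rw [div_lt_iff₀ (by positivity)]
    exact mul_lt_mul_of_pos_left (by exact_mod_cast Nat.lt_succ_of_le hkp) pi_pos
  have hsin : sin θ ≠ 0 := (sin_pos_of_pos_of_lt_pi (by positivity) hθπ).ne'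
  have hN : sin ((p + 1) * θ) = 0 := by
    rw [mul_div_cancel₀ _ (by positivity), mul_comm, sin_nat_mul_pi]
  have := hsa.isStarNormal
  have hdist := ContinuousLinearMap.infDist_spectrum_mul_norm_le H ((2 * cos θ : ℝ) : ℂ)
    (sineWave p θ)
  have hsq : (infDist ((2 * cos θ : ℝ) : ℂ) (spectrum ℂ H)) ^ 2 * (p + 1) ≤ 4 * θ ^ 2 := by
    have h := pow_le_pow_left₀ (mul_nonneg infDist_nonneg (norm_nonneg _)) hdist 2
    rw [mul_pow, norm_sineWave_sq hsin hN, norm_sineWave_residual_sq hH hv0 hN] at h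
    linarith [sin_sq_le_sq (x := θ)]
  exact le_eighteen_mul_div_rpow_of_sq_mul_le (by exact_mod_cast hk1.trans hkp) k.cast_nonneg
    infDist_nonneg hsq

/-- **Spectral information for polymer potentials** (deterministic content of Proposition 4.3).
Let `H` be the discrete Schrödinger operator on `ℓ²(ℤ)` with a bounded potential `v` that
vanishes on the sites `1, …, p`. Then for every `1 ≤ k ≤ p`, the point `2 cos (π k/(p+1))`
lies within distance `18 k / p^{3/2}` of the spectrum of `H`. -/
theorem spectral_information (p : ℕ) (hp : 1 ≤ p) (v : ℤ → ℝ)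
    (hvbdd : ∃ C : ℝ, ∀ n : ℤ, |v n| ≤ C)
    (hv0 : ∀ n : ℤ, 1 ≤ n → n ≤ (p : ℤ) → v n = 0)
    (H : lp (fun _ : ℤ => ℂ) 2 →L[ℂ] lp (fun _ : ℤ => ℂ) 2)
    (hH : ∀ ψ : lp (fun _ : ℤ => ℂ) 2, ∀ n : ℤ,
      (H ψ : ∀ _ : ℤ, ℂ) n = ψ (n + 1) + ψ (n - 1) + (v n : ℂ) * ψ n)
    (hsa : IsSelfAdjoint H) :
    ∀ k : ℕ, 1 ≤ k → k ≤ p →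
      Metric.infDist ((2 * Real.cos (Real.pi * k / (p + 1)) : ℝ) : ℂ) (spectrum ℂ H) ≤
        18 * k / (p : ℝ) ^ ((3 : ℝ) / 2) :=
  spectral_information_general p v hv0 H hH hsa
end

section
/- Let p, q ≥ 1 be integers and a, b ∈ ℝ ∖ {2, −2}. Set A := T(a), B := T(b), λ := (a + √(a²−4))/2 and μ := (b + √(b²−4))/2 (principal complex square root; then λ, μ ∈ ℂ ∖ {0, 1, −1}). Then: (1) max_{p'∈{p−1,p,p+1}} |F_{p'}(λ)| ≤ ‖A^p‖ ≤ 2 max_{p'∈{p−1,p,p+1}} |F_{p'}(λ)|, and likewise max_{q'∈{q−1,q,q+1}} |F_{q'}(μ)| ≤ ‖B^q‖ ≤ 2 max_{q'∈{q−1,q,q+1}} |F_{q'}(μ)|; (2) |F_{p+1}(λ)F_{q+1}(μ) − F_p(λ)F_q(μ)| ≤ ‖A^p B^q‖ ≤ 4 max_{p'∈{p−1,p,p+1}} |F_{p'}(λ)| · max_{q'∈{q−1,q,q+1}} |F_{q'}(μ)|; (3) ‖B^{2p} A^p B^p‖ ≥ |F_{2p+1}(μ)(F_{p+1}(λ)F_{p+1}(μ)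 − F_p(λ)F_p(μ)) − F_{2p}(μ)(F_p(λ)F_{p+1}(μ) − F_{p−1}(λ)F_p(μ))|; (4) ‖A^p B^q A^p B^q‖ ≥ |(F_{p+1}(λ)F_{q+1}(μ) − F_p(λ)F_q(μ))² + (−F_{p+1}(λ)F_q(μ) + F_p(λ)F_{q−1}(μ)) (F_p(λ)F_{q+1}(μ) − F_{p−1}(λ)F_q(μ))|. -/
open scoped Matrix.Norms.L2Operator

/-- The Schrödinger transfer matrix `T(a)` with rows `(a, -1)` and `(1, 0)`. -/
noncomputable def transferM (a : ℝ) : Matrix (Fin 2) (Fin 2) ℝ := !![a, -1; 1, 0]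

/-- The function `F_q(z) = (z^q - z^{-q})/(z - z⁻¹)`. -/
noncomputable def Ffun {K : Type*} [Field K] (q : ℕ) (z : K) : K :=
  (z ^ (q : ℤ) - z ^ (-(q : ℤ))) / (z - z⁻¹)

/-- `max_{p' ∈ {p-1, p, p+1}} |F_{p'}(z)|`. -/
noncomputable def maxF3 (p : ℕ) (z : ℂ) : ℝ :=
  max (‖Ffun (p - 1) z‖)
    (max (‖Ffun p z‖) (‖Ffun (p + 1) z‖))

/-!
Since `λ + λ⁻¹ = a` and `λ ≠ ±1`, the complexification of `T(a)` is `!![λ + λ⁻¹, -1; 1, 0]`,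
and the recurrence `F_{n+2} = (λ + λ⁻¹) F_{n+1} - F_n` identifies its powers: the entries of
`A^p` are `± F_{p+1}(λ), ± F_p(λ), ± F_{p-1}(λ)`. Every entry of a matrix is bounded by its `L²`
operator norm, and the operator norm by the Frobenius norm, i.e. by `2 max |entry|` for `2 × 2`
matrices. This gives (1); the lower bounds in (2)–(4) are the `(0,0)` entries of the products,
and the upper bound in (2) is submultiplicativity.
-/

namespace Matrix

variable {𝕜 m n : Type*} [RCLike 𝕜] [Fintype m] [Fintype n] [DecidableEq n]

lemma norm_apply_le_l2_opNorm (A : Matrix m n 𝕜) (i : m) (j : n) :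
    ‖A i j‖ ≤ ‖A‖ := by
  have h := A.l2_opNorm_mulVec (EuclideanSpace.single j 1)
  rw [PiLp.norm_single, norm_one, mul_one] at h
  refine le_trans (le_of_eq ?_) ((PiLp.norm_apply_le _ i).trans h)
  simp

lemma l2_opNorm_le_sqrt_sum_sq (A : Matrix m n 𝕜) :
    ‖A‖ ≤ √(∑ i, ∑ j, ‖A i j‖ ^ 2) := by
  refine ContinuousLinearMap.opNorm_le_bound _ (Real.sqrt_nonneg _) fun x => ?_
  rw [← Real.sqrt_sq (norm_nonneg x), ← Real.sqrt_mul (by positivity)]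
  refine Real.le_sqrt_of_sq_le ?_
  rw [EuclideanSpace.norm_sq_eq, EuclideanSpace.norm_sq_eq, Finset.sum_mul]
  refine Finset.sum_le_sum fun i _ => ?_
  calc ‖_‖ ^ 2 ≤ (∑ j, ‖A i j‖ * ‖x j‖) ^ 2 := by
        gcongr
        change ‖(A *ᵥ x.ofLp) i‖ ≤ _
        simpa only [mulVec, dotProduct, norm_mul] using
          norm_sum_le Finset.univ fun j => A i j * x.ofLp j
    _ ≤ (∑ j, ‖A i j‖ ^ 2) * ∑ j, ‖x j‖ ^ 2 := Finset.sum_mul_sq_le_sq_mul_sq _ _ _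

lemma l2_opNorm_le_of_norm_apply_le {A : Matrix m n 𝕜} {c : ℝ} (hc : 0 ≤ c)
    (h : ∀ i j, ‖A i j‖ ≤ c) : ‖A‖ ≤ √(Fintype.card m * Fintype.card n) * c := by
  calc ‖A‖ ≤ √(∑ i, ∑ j, ‖A i j‖ ^ 2) := l2_opNorm_le_sqrt_sum_sq A
    _ ≤ √(∑ _i : m, ∑ _j : n, c ^ 2) := by gcongr with i _ j; exact h i j
    _ = √(Fintype.card m * Fintype.card n) * c := by
      rw [← Real.sqrt_sq hc, ← Real.sqrt_mul (by positivity)]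
      simp [mul_assoc]

end Matrix

lemma Matrix.norm_mapMatrix_ofReal_apply_le {m : Type*} [Fintype m] [DecidableEq m]
    (M : Matrix m m ℝ) (i j : m) : ‖Complex.ofRealHom.mapMatrix M i j‖ ≤ ‖M‖ := by
  simpa using M.norm_apply_le_l2_opNorm i j

section Ffun

variable {K : Type*} [Field K] {z : K}

@[simp]
lemma Ffun_zero : Ffun 0 z = 0 := by
  simp [Ffun]

lemma Ffun_one (hz : z - z⁻¹ ≠ 0) : Ffun 1 z = 1 := by
  simpa [Ffun] using div_self hz

lemma Ffun_add_two (hz : z ≠ 0) (n : ℕ) :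
    Ffun (n + 2) z = (z + z⁻¹) * Ffun (n + 1) z - Ffun n z := by
  simp only [Ffun, zpow_neg, zpow_natCast]
  field_simp
  ring

lemma transfer_add_inv_pow (hz : z ≠ 0) (hz' : z - z⁻¹ ≠ 0) {n : ℕ} (hn : 1 ≤ n) :
    !![z + z⁻¹, -1; 1, 0] ^ n = !![Ffun (n + 1) z, -Ffun n z; Ffun n z, -Ffun (n - 1) z] := by
  induction n, hn using Nat.le_induction with
  | base => simp [Ffun_add_two hz 0, Ffun_one hz']
  | succ n hn ih =>
    obtain ⟨k, rfl⟩ := Nat.exists_eq_add_of_le' hn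
    rw [pow_succ, ih, Matrix.mul_fin_two, Nat.add_sub_cancel, Nat.add_sub_cancel,
      Ffun_add_two hz (k + 1), Ffun_add_two hz k]
    ring_nf

end Ffun

lemma half_add_sqrt_spec {K : Type*} [Field K] [NeZero (2 : K)] {w s z : K}
    (hs : s ^ 2 = w ^ 2 - 4) (hw : w ^ 2 ≠ 4) (hz : z = (w + s) / 2) :
    z ≠ 0 ∧ z - z⁻¹ ≠ 0 ∧ z + z⁻¹ = w := by
  have hmul : z * ((w - s) / 2) = 1 := by
    rw [hz]; field_simp; linear_combination -hs
  have hinv : z⁻¹ = (w - s) / 2 := inv_eq_of_mul_eq_one_right hmul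
  have hs0 : s ≠ 0 := by
    rintro rfl
    exact hw (by linear_combination -hs)
  refine ⟨left_ne_zero_of_mul_eq_one hmul, ?_, ?_⟩
  · rwa [hinv, hz, show (w + s) / 2 - (w - s) / 2 = s by field_simp; ring]
  · rw [hinv, hz]; field_simp; ring

lemma transfer_eigenvalue_spec {a : ℝ} (ha : a ≠ 2) (ha' : a ≠ -2) {z : ℂ}
    (hz : z = ((a : ℂ) + ((a : ℂ) ^ 2 - 4) ^ ((1 : ℂ) / 2)) / 2) :
    z ≠ 0 ∧ z - z⁻¹ ≠ 0 ∧ z + z⁻¹ = a := by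
  refine half_add_sqrt_spec ?_ ?_ hz
  · rw [show (1 : ℂ) / 2 = ((2 : ℕ) : ℂ)⁻¹ by norm_num]
    exact Complex.cpow_nat_inv_pow _ two_ne_zero
  · have : a ^ 2 ≠ 4 := by
      rw [show (4 : ℝ) = 2 ^ 2 by norm_num, Ne, sq_eq_sq_iff_eq_or_eq_neg]
      tauto
    exact_mod_cast this

lemma mapMatrix_transferM_pow {a : ℝ} {z : ℂ} (hz : z ≠ 0) (hz' : z - z⁻¹ ≠ 0)
    (ha : z + z⁻¹ = a) {n : ℕ} (hn : 1 ≤ n) :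
    Complex.ofRealHom.mapMatrix (transferM a ^ n) =
      !![Ffun (n + 1) z, -Ffun n z; Ffun n z, -Ffun (n - 1) z] := by
  have hT : Complex.ofRealHom.mapMatrix (transferM a) = !![z + z⁻¹, -1; 1, 0] := by
    rw [ha]
    ext i j
    fin_cases i <;> fin_cases j <;> simp [transferM]
  rw [map_pow, hT, transfer_add_inv_pow hz hz' hn]

lemma maxF3_le_l2_opNorm_le_two_mul_maxF3 {M : Matrix (Fin 2) (Fin 2) ℝ} {z : ℂ} {p : ℕ}
    (hM : Complex.ofRealHom.mapMatrix M =
      !![Ffun (p + 1) z, -Ffun p z; Ffun p z, -Ffun (p - 1) z]) :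
    maxF3 p z ≤ ‖M‖ ∧ ‖M‖ ≤ 2 * maxF3 p z := by
  refine ⟨max_le ?_ (max_le ?_ ?_), ?_⟩
  · simpa [hM] using M.norm_mapMatrix_ofReal_apply_le 1 1
  · simpa [hM] using M.norm_mapMatrix_ofReal_apply_le 1 0
  · simpa [hM] using M.norm_mapMatrix_ofReal_apply_le 0 0
  · have hmax : ∀ i j, ‖M i j‖ ≤ maxF3 p z := by
      intro i j
      rw [← Complex.norm_real, show (M i j : ℂ) = Complex.ofRealHom.mapMatrix M i j from rfl,
        hM]
      fin_cases i <;> fin_cases j <;> simp [maxF3]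
    have hc : 0 ≤ maxF3 p z := (norm_nonneg _).trans (hmax 0 0)
    simpa using M.l2_opNorm_le_of_norm_apply_le hc hmax

/-- **Norm bounds on powers of transfer matrices** (Lemma 4.6). With
`λ = (a + √(a²-4))/2`, `μ = (b + √(b²-4))/2` (principal complex square root),
`A = T(a)`, `B = T(b)`, the operator norms of `A^p`, `B^q`, `A^p B^q`, `B^{2p} A^p B^p` and
`A^p B^q A^p B^q` are controlled by the function `F`. -/
theorem norm_bounds_matrix_powers (p q : ℕ) (hp : 1 ≤ p) (hq : 1 ≤ q)
    (a b : ℝ) (ha : a ≠ 2) (ha' : a ≠ -2) (hb : b ≠ 2) (hb' : b ≠ -2)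
    (lam mu : ℂ)
    (hlam : lam = ((a : ℂ) + ((a : ℂ) ^ 2 - 4) ^ ((1 : ℂ) / 2)) / 2)
    (hmu : mu = ((b : ℂ) + ((b : ℂ) ^ 2 - 4) ^ ((1 : ℂ) / 2)) / 2)
    (A B : Matrix (Fin 2) (Fin 2) ℝ) (hA : A = transferM a) (hB : B = transferM b) :
    (maxF3 p lam ≤ ‖A ^ p‖ ∧ ‖A ^ p‖ ≤ 2 * maxF3 p lam) ∧
    (maxF3 q mu ≤ ‖B ^ q‖ ∧ ‖B ^ q‖ ≤ 2 * maxF3 q mu) ∧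
    (‖Ffun (p + 1) lam * Ffun (q + 1) mu - Ffun p lam * Ffun q mu‖ ≤
        ‖A ^ p * B ^ q‖ ∧
      ‖A ^ p * B ^ q‖ ≤ 4 * maxF3 p lam * maxF3 q mu) ∧
    (‖Ffun (2 * p + 1) mu *
          (Ffun (p + 1) lam * Ffun (p + 1) mu - Ffun p lam * Ffun p mu) -
        Ffun (2 * p) mu *
          (Ffun p lam * Ffun (p + 1) mu - Ffun (p - 1) lam * Ffun p mu)‖ ≤
      ‖B ^ (2 * p) * A ^ p * B ^ p‖) ∧
    (‖(Ffun (p + 1) lam * Ffun (q + 1) mu - Ffun p lam * Ffun q mu) ^ 2 +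
        (-(Ffun (p + 1) lam * Ffun q mu) + Ffun p lam * Ffun (q - 1) mu) *
          (Ffun p lam * Ffun (q + 1) mu - Ffun (p - 1) lam * Ffun q mu)‖ ≤
      ‖A ^ p * B ^ q * (A ^ p) * B ^ q‖) := by
  obtain ⟨hlam0, hlam1, hlam2⟩ := transfer_eigenvalue_spec ha ha' hlam
  obtain ⟨hmu0, hmu1, hmu2⟩ := transfer_eigenvalue_spec hb hb' hmu
  subst hA hB
  have hAp := mapMatrix_transferM_pow hlam0 hlam1 hlam2 hp
  have hBq := mapMatrix_transferM_pow hmu0 hmu1 hmu2 hq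
  have hBp := mapMatrix_transferM_pow hmu0 hmu1 hmu2 hp
  have hB2p := mapMatrix_transferM_pow hmu0 hmu1 hmu2 (by omega : 1 ≤ 2 * p)
  have hAnorm := maxF3_le_l2_opNorm_le_two_mul_maxF3 hAp
  have hBnorm := maxF3_le_l2_opNorm_le_two_mul_maxF3 hBq
  refine ⟨hAnorm, hBnorm, ⟨?_, ?_⟩, ?_, ?_⟩
  · convert (transferM a ^ p * transferM b ^ q).norm_mapMatrix_ofReal_apply_le 0 0
      using 2
    simp only [map_mul, hAp, hBq, Matrix.mul_fin_two, Matrix.of_apply, Matrix.cons_val_zero]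
    ring
  · calc ‖transferM a ^ p * transferM b ^ q‖
        ≤ ‖transferM a ^ p‖ * ‖transferM b ^ q‖ := Matrix.l2_opNorm_mul _ _
      _ ≤ (2 * maxF3 p lam) * (2 * maxF3 q mu) :=
        mul_le_mul hAnorm.2 hBnorm.2 (norm_nonneg _) (by unfold maxF3; positivity)
      _ = 4 * maxF3 p lam * maxF3 q mu := by ring
  · convert (transferM b ^ (2 * p) * transferM a ^ p * transferM b ^ p
      ).norm_mapMatrix_ofReal_apply_le 0 0 using 2
    simp only [map_mul, hAp, hBp, hB2p, Matrix.mul_fin_two, Matrix.of_apply,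
      Matrix.cons_val_zero]
    ring
  · convert (transferM a ^ p * transferM b ^ q * transferM a ^ p * transferM b ^ q
      ).norm_mapMatrix_ofReal_apply_le 0 0 using 2
    simp only [map_mul, hAp, hBq, Matrix.mul_fin_two, Matrix.of_apply, Matrix.cons_val_zero]
    ring
end

section
/- Let q ≥ 1 be an integer. (i) Let θ ∈ [0, 2π], z := e^{iθ}, and δ_1, δ_2 ∈ (0, π/2). If min_{k∈ℤ}|θ − kπ| ≥ δ_1 (so that z ≠ ±1), then |F_q(z)| ≤ 2/δ_1. If z ≠ ±1 and min_{k∈ℤ}|qθ − kπ| ≥ δ_2, then |F_q(z)| ≥ δ_2/2. (ii) If x, x_0 ∈ ℝ with x > x_0 > 1, then x^{q−1}(1 − x_0^{−2q}) ≤ F_q(x) ≤ x^{q−1}/(1 − x_0^{−2}). -/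
/-! On the unit circle `F_q(e^{iθ}) = sin(qθ)/sin θ`, and Jordan's inequality
`|sin t| ≥ (2/π) · dist(t, πℤ)`, applied to `t = θ` and to `t = qθ`, gives both estimates.
On `(1, ∞)`, `F_q(x) = x^{q-1} (1 - x^{-2q}) / (1 - x^{-2})`, where `x^{-2q}` and `x^{-2}` lie in
`(0, 1)` and decrease in `x`. -/

open Real

theorem Ffun_eq_pow_mul_div {K : Type*} [Field K] {q : ℕ} (hq : 1 ≤ q) {z : K} (hz : z ≠ 0) :
    Ffun q z = z ^ (q - 1) * (1 - z ^ (-(2 * q : ℤ))) / (1 - z ^ (-2 : ℤ)) := by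
  obtain ⟨n, rfl⟩ := Nat.exists_eq_add_of_le' hq
  simp only [Ffun, Nat.add_sub_cancel, zpow_neg, mul_comm (2 : ℤ), zpow_mul, zpow_natCast]
  field_simp
  ring

theorem two_div_pi_mul_le_abs_sin {δ t : ℝ} (h : ∀ k : ℤ, δ ≤ |t - k * π|) :
    2 / π * δ ≤ |sin t| := by
  set k := round (t / π)
  have hdist : |t - k * π| ≤ π / 2 := by
    have := abs_sub_round (t / π)
    rw [show t - k * π = (t / π - k) * π by field_simp, abs_mul, abs_of_pos pi_pos]
    nlinarith [pi_pos]
  calc 2 / π * δ ≤ 2 / π * |t - k * π| := by gcongr; exact h k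
    _ ≤ |sin (t - k * π)| := mul_abs_le_abs_sin hdist
    _ = |sin t| := by simp [sin_sub_int_mul_pi, abs_mul]

theorem half_le_abs_sin {δ t : ℝ} (hδ : 0 ≤ δ) (h : ∀ k : ℤ, δ ≤ |t - k * π|) :
    δ / 2 ≤ |sin t| := by
  refine le_trans ?_ (two_div_pi_mul_le_abs_sin h)
  rw [div_mul_eq_mul_div, div_le_div_iff₀ two_pos pi_pos]
  nlinarith [pi_le_four]

theorem Complex.exp_mul_I_sub_inv (x : ℂ) :
    Complex.exp (x * Complex.I) - (Complex.exp (x * Complex.I))⁻¹ =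
      2 * Complex.sin x * Complex.I := by
  rw [← Complex.exp_neg, ← neg_mul, Complex.exp_mul_I, Complex.exp_mul_I, Complex.cos_neg,
    Complex.sin_neg]
  ring

theorem Ffun_exp_mul_I (q : ℕ) (x : ℂ) :
    Ffun q (Complex.exp (x * Complex.I)) = Complex.sin (q * x) / Complex.sin x := by
  rw [Ffun, zpow_neg, ← Complex.exp_int_mul, ← mul_assoc, Int.cast_natCast,
    Complex.exp_mul_I_sub_inv, Complex.exp_mul_I_sub_inv,
    mul_div_mul_right _ _ Complex.I_ne_zero, mul_div_mul_left _ _ two_ne_zero]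

theorem norm_Ffun_exp_mul_I (q : ℕ) (θ : ℝ) :
    ‖Ffun q (Complex.exp (θ * Complex.I))‖ = |sin (q * θ)| / |sin θ| := by
  rw [Ffun_exp_mul_I, ← Complex.ofReal_natCast, ← Complex.ofReal_mul, ← Complex.ofReal_sin,
    ← Complex.ofReal_sin, norm_div, Complex.norm_real, Complex.norm_real, norm_eq_abs,
    norm_eq_abs]

theorem exp_mul_I_eq_one_or_neg_one_of_sin_eq_zero {θ : ℝ} (h : sin θ = 0) :
    Complex.exp (θ * Complex.I) = 1 ∨ Complex.exp (θ * Complex.I) = -1 := by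
  have hcos : cos θ = 1 ∨ cos θ = -1 := sq_eq_one_iff.1 (by nlinarith [sin_sq_add_cos_sq θ])
  rw [← Complex.ofReal_one, ← Complex.ofReal_neg, Complex.exp_mul_I, ← Complex.ofReal_cos,
    ← Complex.ofReal_sin, h, Complex.ofReal_zero, zero_mul, add_zero]
  exact hcos.imp (congrArg _) (congrArg _)

theorem norm_Ffun_exp_mul_I_le {q : ℕ} {θ δ : ℝ} (hδ : 0 < δ)
    (h : ∀ k : ℤ, δ ≤ |θ - k * π|) :
    ‖Ffun q (Complex.exp (θ * Complex.I))‖ ≤ 2 / δ := by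
  rw [norm_Ffun_exp_mul_I, show 2 / δ = 1 / (δ / 2) by field_simp]
  exact div_le_div₀ zero_le_one (abs_sin_le_one _) (half_pos hδ) (half_le_abs_sin hδ.le h)

theorem le_norm_Ffun_exp_mul_I {q : ℕ} {θ δ : ℝ} (hθ : sin θ ≠ 0) (hδ : 0 ≤ δ)
    (h : ∀ k : ℤ, δ ≤ |q * θ - k * π|) :
    δ / 2 ≤ ‖Ffun q (Complex.exp (θ * Complex.I))‖ := by
  rw [norm_Ffun_exp_mul_I]
  exact (half_le_abs_sin hδ h).trans
    (le_div_self (abs_nonneg _) (abs_pos.2 hθ) (abs_sin_le_one θ))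

theorem Ffun_real_bounds {q : ℕ} (hq : 1 ≤ q) {x x₀ : ℝ} (hx₀ : 1 < x₀) (hx : x₀ ≤ x) :
    x ^ (q - 1) * (1 - x₀ ^ (-(2 * q : ℤ))) ≤ Ffun q x ∧
      Ffun q x ≤ x ^ (q - 1) / (1 - x₀ ^ (-2 : ℤ)) := by
  have hx0 : 0 < x := by linarith
  have zpow_neg_anti : ∀ n : ℕ, x ^ (-(n : ℤ)) ≤ x₀ ^ (-(n : ℤ)) := fun n ↦ by
    rw [zpow_neg, zpow_neg]
    exact inv_anti₀ (zpow_pos (by linarith) _) (zpow_le_zpow_left₀ n.cast_nonneg (by linarith) hx)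
  have ha : x ^ (-(2 * q : ℤ)) ≤ x₀ ^ (-(2 * q : ℤ)) := by exact_mod_cast zpow_neg_anti (2 * q)
  have ha0 : 0 < x ^ (-(2 * q : ℤ)) := zpow_pos hx0 _
  have ha1 : x ^ (-(2 * q : ℤ)) < 1 := zpow_lt_one_of_neg₀ (hx₀.trans_le hx) (by omega)
  have hb : x ^ (-2 : ℤ) ≤ x₀ ^ (-2 : ℤ) := zpow_neg_anti 2
  have hb0 : 0 < x ^ (-2 : ℤ) := zpow_pos hx0 _
  have hb1 : x₀ ^ (-2 : ℤ) < 1 := zpow_lt_one_of_neg₀ hx₀ (by norm_num)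
  rw [Ffun_eq_pow_mul_div hq hx0.ne', mul_div_assoc]
  constructor
  · gcongr
    calc 1 - x₀ ^ (-(2 * q : ℤ)) ≤ 1 - x ^ (-(2 * q : ℤ)) := by linarith
      _ ≤ (1 - x ^ (-(2 * q : ℤ))) / (1 - x ^ (-2 : ℤ)) :=
        le_div_self (by linarith) (by linarith) (by linarith)
  · rw [← mul_one_div (x ^ (q - 1))]
    gcongr
    linarith

/-- **Bounds on the `F`-function** (Lemma 4.7).
(i) For `z = e^{iθ}`: if `|θ - kπ| ≥ δ₁` for all `k ∈ ℤ` then `|F_q(z)| ≤ 2/δ₁`; if `z ≠ ±1`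
and `|qθ - kπ| ≥ δ₂` for all `k ∈ ℤ` then `|F_q(z)| ≥ δ₂/2`.
(ii) For real `x > x₀ > 1`: `x^{q-1} (1 - x₀^{-2q}) ≤ F_q(x) ≤ x^{q-1} (1 - x₀^{-2})⁻¹`. -/
theorem F_function_bounds (q : ℕ) (hq : 1 ≤ q) :
    (∀ θ δ₁ : ℝ, 0 ≤ θ → θ ≤ 2 * Real.pi → 0 < δ₁ → δ₁ < Real.pi / 2 →
      (∀ k : ℤ, δ₁ ≤ |θ - k * Real.pi|) →
      ‖Ffun q (Complex.exp ((θ : ℂ) * Complex.I))‖ ≤ 2 / δ₁) ∧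
    (∀ θ δ₂ : ℝ, 0 ≤ θ → θ ≤ 2 * Real.pi → 0 < δ₂ → δ₂ < Real.pi / 2 →
      Complex.exp ((θ : ℂ) * Complex.I) ≠ 1 → Complex.exp ((θ : ℂ) * Complex.I) ≠ -1 →
      (∀ k : ℤ, δ₂ ≤ |(q : ℝ) * θ - k * Real.pi|) →
      δ₂ / 2 ≤ ‖Ffun q (Complex.exp ((θ : ℂ) * Complex.I))‖) ∧
    (∀ x x₀ : ℝ, 1 < x₀ → x₀ < x →
      x ^ (q - 1) * (1 - x₀ ^ (-(2 * q : ℤ))) ≤ Ffun q x ∧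
      Ffun q x ≤ x ^ (q - 1) / (1 - x₀ ^ (-2 : ℤ))) := by
  refine ⟨fun θ δ₁ _ _ hδ₁ _ h ↦ norm_Ffun_exp_mul_I_le hδ₁ h, ?_,
    fun x x₀ hx₀ hx ↦ Ffun_real_bounds hq hx₀ hx.le⟩
  intro θ δ₂ _ _ hδ₂ _ hne_one hne_neg_one h
  have hsin : sin θ ≠ 0 := fun h0 ↦
    (exp_mul_I_eq_one_or_neg_one_of_sin_eq_zero h0).elim hne_one hne_neg_one
  exact le_norm_Ffun_exp_mul_I hsin hδ₂.le h
end

section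
/- Let r_0 ≥ 32 and r, r' ∈ ℝ with |r| ≥ r_0 and |r'| ≥ r_0. Then |r| ≤ ‖T(r)‖ ≤ |r| (1 + r_0^{−2}) and |r' r| ≤ ‖T(r') T(r)‖ ≤ |r' r| (1 + 3 r_0^{−2}). -/
/-!
The L2 operator norm of a matrix lies between `‖A v‖ / ‖v‖` for any test vector `v ≠ 0` and the
Frobenius norm. For `T(r)` the test vector `e₁` and the Frobenius norm `√(r² + 2)` give the first
pair of bounds. For `T(r') T(r) = !![r'r - 1, -r'; r, -1]` the test vector `e₁` works when
`r'r ≤ 0` and `(r', -1)` when `r'r ≥ 0`, while the squared Frobenius norm is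
`(r'r)² + (r - r')² + 2`, and `|r|, |r'| ≥ r₀` bound the excess over `(r'r)²` by `6 (r'r)² r₀⁻²`.
-/

open scoped Matrix.Norms.L2Operator

namespace Matrix

section L2OpNorm

variable {m n : Type*} [Fintype m] [Fintype n] [DecidableEq n]

theorem l2_opNorm_le_of_sum_sq_le (A : Matrix m n ℝ) {b : ℝ} (hb : 0 ≤ b)
    (h : ∑ i, ∑ j, A i j ^ 2 ≤ b ^ 2) : ‖A‖ ≤ b := by
  rw [l2_opNorm_def]
  refine ContinuousLinearMap.opNorm_le_bound _ hb fun x => ?_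
  refine (sq_le_sq₀ (norm_nonneg _) (by positivity)).mp ?_
  simp only [mul_pow, EuclideanSpace.norm_sq_eq, Real.norm_eq_abs, sq_abs]
  calc ∑ i, (A *ᵥ x.ofLp) i ^ 2 ≤ ∑ i, (∑ j, A i j ^ 2) * ∑ j, x.ofLp j ^ 2 :=
        Finset.sum_le_sum fun i _ => Finset.sum_mul_sq_le_sq_mul_sq _ _ _
    _ = (∑ i, ∑ j, A i j ^ 2) * ∑ j, x.ofLp j ^ 2 := (Finset.sum_mul ..).symm
    _ ≤ b ^ 2 * ∑ j, x.ofLp j ^ 2 := by gcongr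

theorem abs_le_l2_opNorm_of_sq_mul_le (A : Matrix m n ℝ) {v : n → ℝ} (hv : v ≠ 0) {c : ℝ}
    (h : c ^ 2 * ∑ j, v j ^ 2 ≤ ∑ i, (A *ᵥ v) i ^ 2) : |c| ≤ ‖A‖ := by
  have hAv := pow_le_pow_left₀ (norm_nonneg _) (A.l2_opNorm_mulVec (WithLp.toLp 2 v)) 2
  simp only [mul_pow, EuclideanSpace.norm_sq_eq, Real.norm_eq_abs, sq_abs] at hAv
  have hv_pos : 0 < ∑ j, v j ^ 2 := by
    obtain ⟨j, hj⟩ := Function.ne_iff.mp hv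
    exact Finset.sum_pos' (fun j _ => sq_nonneg (v j)) ⟨j, Finset.mem_univ j, sq_pos_of_ne_zero hj⟩
  rw [← abs_norm]
  exact sq_le_sq.mp (le_of_mul_le_mul_right (h.trans hAv) hv_pos)

end L2OpNorm

theorem l2_opNorm_fin_two_le {a b c d β : ℝ} (hβ : 0 ≤ β)
    (h : a ^ 2 + b ^ 2 + c ^ 2 + d ^ 2 ≤ β ^ 2) : ‖!![a, b; c, d]‖ ≤ β :=
  l2_opNorm_le_of_sum_sq_le _ hβ (by simpa [Fin.sum_univ_two, add_assoc] using h)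

theorem abs_le_l2_opNorm_fin_two {a b c d x y γ : ℝ} (hxy : ![x, y] ≠ 0)
    (h : γ ^ 2 * (x ^ 2 + y ^ 2) ≤ (a * x + b * y) ^ 2 + (c * x + d * y) ^ 2) :
    |γ| ≤ ‖!![a, b; c, d]‖ :=
  abs_le_l2_opNorm_of_sq_mul_le _ hxy (by simpa [Fin.sum_univ_two, mul_comm] using h)

end Matrix

theorem transferM_mul_transferM (r' r : ℝ) :
    transferM r' * transferM r = !![r' * r - 1, -r'; r, -1] := by
  simp [transferM, sub_eq_add_neg]

theorem abs_le_norm_transferM (r : ℝ) : |r| ≤ ‖transferM r‖ :=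
  Matrix.abs_le_l2_opNorm_fin_two (x := 1) (y := 0) (by simp) (by nlinarith)

theorem norm_transferM_le {r s : ℝ} (hs : 0 ≤ s) (hr : 1 ≤ r ^ 2 * s) :
    ‖transferM r‖ ≤ |r| * (1 + s) :=
  Matrix.l2_opNorm_fin_two_le (by positivity) (by
    rw [mul_pow, sq_abs]
    nlinarith [mul_nonneg (sq_nonneg r) (sq_nonneg s)])

theorem abs_mul_le_norm_transferM_mul_transferM (r' r : ℝ) :
    |r' * r| ≤ ‖transferM r' * transferM r‖ := by
  rw [transferM_mul_transferM]
  rcases le_total (r' * r) 0 with hneg | hpos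
  · exact Matrix.abs_le_l2_opNorm_fin_two (x := 1) (y := 0) (by simp) (by nlinarith)
  · exact Matrix.abs_le_l2_opNorm_fin_two (x := r') (y := -1) (by simp) (by nlinarith)

theorem norm_transferM_mul_transferM_le {r' r s : ℝ} (hs : 0 ≤ s) (hr' : 1 ≤ r' ^ 2 * s)
    (hr : 1 ≤ r ^ 2 * s) :
    ‖transferM r' * transferM r‖ ≤ |r' * r| * (1 + 3 * s) := by
  rw [transferM_mul_transferM]
  have hsq : 1 ≤ (|r' * r| * s) ^ 2 := by
    rw [mul_pow, sq_abs, mul_pow]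
    nlinarith
  have hrr's : 1 ≤ |r' * r| * s := (one_le_sq_iff₀ (by positivity)).mp hsq
  refine Matrix.l2_opNorm_fin_two_le (by positivity) ?_
  nlinarith [neg_abs_le (r' * r), sq_abs (r' * r), mul_le_mul_of_nonneg_left hr (sq_nonneg r'),
    mul_le_mul_of_nonneg_left hr' (sq_nonneg r),
    mul_nonneg (abs_nonneg (r' * r)) (sub_nonneg.2 hrr's)]

theorem one_le_sq_mul_inv_sq {r₀ r : ℝ} (h0 : 0 < r₀) (hr : r₀ ≤ |r|) :
    1 ≤ r ^ 2 * r₀⁻¹ ^ 2 := by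
  rw [← sq_abs, ← mul_pow]
  exact one_le_pow₀ ((le_mul_inv_iff₀ h0).mpr (by simpa using hr))

/-- **Norm estimates for transfer matrices** (Lemma 5.3). For `|r|, |r'| ≥ r₀ ≥ 32`:
`|r| ≤ ‖T(r)‖ ≤ |r| (1 + r₀⁻²)` and `|r' r| ≤ ‖T(r') T(r)‖ ≤ |r' r| (1 + 3 r₀⁻²)`. -/
theorem transfer_matrix_norm_estimates (r₀ r r' : ℝ) (hr₀ : 32 ≤ r₀)
    (hr : r₀ ≤ |r|) (hr' : r₀ ≤ |r'|) :
    |r| ≤ ‖transferM r‖ ∧ ‖transferM r‖ ≤ |r| * (1 + r₀⁻¹ ^ 2) ∧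
    |r' * r| ≤ ‖transferM r' * transferM r‖ ∧
    ‖transferM r' * transferM r‖ ≤ |r' * r| * (1 + 3 * r₀⁻¹ ^ 2) := by
  have hr₀_pos : 0 < r₀ := by linarith
  have hs : 0 ≤ r₀⁻¹ ^ 2 := by positivity
  have hrs := one_le_sq_mul_inv_sq hr₀_pos hr
  have hr's := one_le_sq_mul_inv_sq hr₀_pos hr'
  exact ⟨abs_le_norm_transferM r, norm_transferM_le hs hrs,
    abs_mul_le_norm_transferM_mul_transferM r' r, norm_transferM_mul_transferM_le hs hr's hrs⟩
end

section
/- Let r_0 ≥ 32, n ≥ 1, and r_1, …, r_n ∈ ℝ with |r_k| ≥ r_0 for all k, and set L_k := T(r_k). Then |(1/n) log‖L_n ⋯ L_1‖ − (1/n) Σ_{k=1}^n log|r_k|| ≤ (1/n) log(|r_n| |r_1|) + 1.2·10³ · r_0^{−2}. -/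
/-!
The first column of `L_n ⋯ L_1` stays in the cone `|y| ≤ (2/r₀)|x|`, on which `T(a)` stretches
the first coordinate by at least `|a| - 2/r₀ ≥ |a| e^{-4/r₀²}`. In the other direction
`‖T(a)‖ ≤ |a| + 1/|a| ≤ |a| e^{1/r₀²}` by the Frobenius bound, and the operator norm is
submultiplicative. So `‖L_n ⋯ L_1‖` lies between `∏ |r_k| · e^{∓4n/r₀²}`: the normalized
logarithm deviates from the mean of `log |r_k|` by at most `4/r₀²`.
-/

open scoped Matrix.Norms.L2Operator

/-- The ordered product `L (n-1) * ⋯ * L 1 * L 0`. -/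
noncomputable def prodRev (L : ℕ → Matrix (Fin 2) (Fin 2) ℝ) (n : ℕ) :
    Matrix (Fin 2) (Fin 2) ℝ :=
  ((List.range n).reverse.map L).prod

open Real Finset

theorem Matrix.norm_entry_le_l2_opNorm {𝕜 m n : Type*} [RCLike 𝕜] [Fintype m] [Fintype n]
    [DecidableEq n] (A : Matrix m n 𝕜) (i : m) (j : n) : ‖A i j‖ ≤ ‖A‖ := by
  have h := A.l2_opNorm_mulVec (EuclideanSpace.single j 1)
  rw [PiLp.norm_single, norm_one, mul_one] at h
  refine le_trans (le_of_eq ?_) ((PiLp.norm_apply_le _ i).trans h)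
  simp [Matrix.mulVec_single]

theorem norm_transferM_le_sqrt (a : ℝ) : ‖transferM a‖ ≤ √(a ^ 2 + 2) := by
  rw [Matrix.cstar_norm_def]
  refine ContinuousLinearMap.opNorm_le_bound _ (sqrt_nonneg _) fun v => ?_
  rw [← sqrt_sq (norm_nonneg v), ← sqrt_mul (by positivity), EuclideanSpace.norm_eq]
  refine sqrt_le_sqrt ?_
  simp only [transferM, Matrix.ofLp_toEuclideanCLM, Matrix.mulVec, dotProduct, Matrix.of_apply,
    Matrix.cons_val', Matrix.cons_val_fin_one, Fin.sum_univ_two, Matrix.cons_val_zero,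
    Matrix.cons_val_one, norm_eq_abs, sq_abs, neg_mul, one_mul, zero_mul, add_zero,
    EuclideanSpace.norm_eq]
  rw [sq_sqrt (by positivity)]
  -- `(a² + 2)(x² + y²) - ((a x - y)² + x²) = (a y + x)² + y²`
  nlinarith [sq_nonneg (a * v 1 + v 0), sq_nonneg (v 1)]

theorem norm_transferM_le_s16 (a : ℝ) (ha : a ≠ 0) : ‖transferM a‖ ≤ |a| + |a|⁻¹ := by
  refine (norm_transferM_le_sqrt a).trans (sqrt_le_iff.mpr ⟨by positivity, ?_⟩)
  have : |a| * |a|⁻¹ = 1 := mul_inv_cancel₀ (abs_ne_zero.mpr ha)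
  nlinarith [sq_abs a, sq_nonneg (|a|⁻¹)]

theorem transferM_mul_apply_zero_zero (a : ℝ) (M : Matrix (Fin 2) (Fin 2) ℝ) :
    (transferM a * M) 0 0 = a * M 0 0 - M 1 0 := by
  simp [transferM, Matrix.mul_apply, Fin.sum_univ_two, sub_eq_add_neg]

theorem transferM_mul_apply_one_zero (a : ℝ) (M : Matrix (Fin 2) (Fin 2) ℝ) :
    (transferM a * M) 1 0 = M 0 0 := by
  simp [transferM, Matrix.mul_apply, Fin.sum_univ_two]

theorem prodRev_zero (L : ℕ → Matrix (Fin 2) (Fin 2) ℝ) : prodRev L 0 = 1 := rfl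

theorem prodRev_succ (L : ℕ → Matrix (Fin 2) (Fin 2) ℝ) (n : ℕ) :
    prodRev L (n + 1) = L n * prodRev L n := by
  simp [prodRev, List.range_succ]

theorem norm_prodRev_le (L : ℕ → Matrix (Fin 2) (Fin 2) ℝ) (n : ℕ) :
    ‖prodRev L n‖ ≤ ∏ k ∈ range n, ‖L k‖ := by
  induction n with
  | zero => simp [prodRev_zero]
  | succ n ih =>
    rw [prodRev_succ, prod_range_succ, mul_comm (∏ k ∈ range n, ‖L k‖)]
    exact (norm_mul_le _ _).trans (mul_le_mul_of_nonneg_left ih (norm_nonneg _))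

theorem prodRev_transferM_cone (r : ℕ → ℝ) {δ : ℝ} (hδ : 0 ≤ δ) {n : ℕ}
    (hr : ∀ k < n, 1 ≤ δ * (|r k| - δ)) :
    |prodRev (fun k => transferM (r k)) n 1 0| ≤ δ * |prodRev (fun k => transferM (r k)) n 0 0|
      ∧ ∏ k ∈ range n, (|r k| - δ) ≤ |prodRev (fun k => transferM (r k)) n 0 0| := by
  induction n with
  | zero => simp [prodRev_zero, hδ]
  | succ n ih =>
    obtain ⟨hcone, hgrowth⟩ := ih fun k hk => hr k (by omega)
    set M := prodRev (fun k => transferM (r k)) n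
    have hstretch : (|r n| - δ) * |M 0 0| ≤ |r n * M 0 0 - M 1 0| := by
      have := abs_sub_abs_le_abs_sub (r n * M 0 0) (M 1 0)
      rw [abs_mul] at this
      linarith
    have hexpand : 1 ≤ δ * (|r n| - δ) := hr n (by omega)
    have hfactor : 0 ≤ |r n| - δ := by nlinarith
    rw [prodRev_succ, transferM_mul_apply_zero_zero, transferM_mul_apply_one_zero,
      prod_range_succ]
    constructor
    · nlinarith [abs_nonneg (M 0 0)]
    · calc (∏ k ∈ range n, (|r k| - δ)) * (|r n| - δ) ≤ |M 0 0| * (|r n| - δ) :=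
            mul_le_mul_of_nonneg_right hgrowth hfactor
        _ ≤ _ := by linarith

theorem add_inv_le_mul_exp {x ε : ℝ} (hx : 0 < x) (hε : (x ^ 2)⁻¹ ≤ ε) :
    x + x⁻¹ ≤ x * exp ε :=
  calc x + x⁻¹ = x * ((x ^ 2)⁻¹ + 1) := by field_simp; ring
    _ ≤ x * exp ε :=
      mul_le_mul_of_nonneg_left ((add_le_add_left hε 1).trans (add_one_le_exp ε)) hx.le

theorem mul_exp_neg_le_sub {x δ ε : ℝ} (hx : 0 ≤ x) (hε : 0 ≤ ε) (h : δ * (1 + ε) ≤ ε * x) :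
    x * exp (-ε) ≤ x - δ := by
  have hexp : exp (-ε) * (1 + ε) ≤ 1 :=
    calc exp (-ε) * (1 + ε) ≤ exp (-ε) * exp ε := by
          gcongr; linarith [add_one_le_exp ε]
      _ = 1 := by rw [← exp_add, neg_add_cancel, exp_zero]
  nlinarith [exp_pos (-ε)]

theorem abs_log_sub_log_le {x y ε : ℝ} (hy : 0 < y) (hlo : y * exp (-ε) ≤ x)
    (hhi : x ≤ y * exp ε) : |log x - log y| ≤ ε := by
  have hx : 0 < x := lt_of_lt_of_le (by positivity) hlo
  have hlo' := log_le_log (by positivity) hlo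
  have hhi' := log_le_log hx hhi
  rw [log_mul hy.ne' (exp_pos _).ne', log_exp] at hlo' hhi'
  exact abs_le.mpr ⟨by linarith, by linarith⟩

theorem abs_log_sub_sum_log_le {ι : Type*} (s : Finset ι) {f : ι → ℝ} {x ε : ℝ}
    (hf : ∀ i ∈ s, 0 < f i) (hlo : ∏ i ∈ s, f i * exp (-ε) ≤ x)
    (hhi : x ≤ ∏ i ∈ s, f i * exp ε) : |log x - ∑ i ∈ s, log (f i)| ≤ #s * ε := by
  rw [← log_prod fun i hi => (hf i hi).ne']
  simp only [prod_mul_distrib, prod_const, ← exp_nat_mul, mul_neg] at hlo hhi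
  exact abs_log_sub_log_le (prod_pos hf) hlo hhi

/-- **Asymptotics of the Lyapunov exponent off the spectrum** (Corollary 5.2, deterministic
form). For `|r_k| ≥ r₀ ≥ 32` and `L_k = T(r_k)`:
`|(1/n) log ‖L_n ⋯ L_1‖ - (1/n) ∑ log |r_k|| ≤ (1/n) log (|r_n| |r_1|) + 1.2·10³ r₀⁻²`. -/
theorem lyapunov_asymptotics_off_spectrum (r₀ : ℝ) (hr₀ : 32 ≤ r₀)
    (n : ℕ) (hn : 1 ≤ n) (r : ℕ → ℝ) (hr : ∀ k < n, r₀ ≤ |r k|) :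
    |(1 / n : ℝ) * Real.log ‖prodRev (fun k => transferM (r k)) n‖ -
        (1 / n : ℝ) * ∑ k ∈ Finset.range n, Real.log (abs (r k))| ≤
      (1 / n : ℝ) * Real.log (|r (n - 1)| * |r 0|) + 1.2 * 10 ^ 3 * r₀⁻¹ ^ 2 := by
  set P := prodRev (fun k => transferM (r k)) n
  set t := r₀⁻¹
  have ht : r₀ * t = 1 := mul_inv_cancel₀ (by positivity)
  have ht_pos : 0 < t := by positivity
  have ht_small : t ≤ 1 / 32 := by nlinarith
  have hr_pos : ∀ k ∈ range n, 0 < |r k| := fun k hk =>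
    (by positivity : (0 : ℝ) < r₀).trans_le (hr k (mem_range.mp hk))
  have hlower : ∏ k ∈ range n, |r k| * exp (-(4 * t ^ 2)) ≤ ‖P‖ := by
    have hcone := prodRev_transferM_cone r (δ := 2 * t) (by positivity) (n := n) fun k hk => by
      nlinarith [hr k hk]
    calc _ ≤ ∏ k ∈ range n, (|r k| - 2 * t) :=
          prod_le_prod (fun k hk => (mul_pos (hr_pos k hk) (exp_pos _)).le) fun k hk =>
            mul_exp_neg_le_sub (hr_pos k hk).le (by positivity)
              (by nlinarith [mul_le_mul_of_nonneg_left (hr k (mem_range.mp hk)) (sq_nonneg t)])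
      _ ≤ |P 0 0| := hcone.2
      _ ≤ ‖P‖ := Matrix.norm_entry_le_l2_opNorm P 0 0
  have hupper : ‖P‖ ≤ ∏ k ∈ range n, |r k| * exp (4 * t ^ 2) := by
    refine (norm_prodRev_le _ n).trans (prod_le_prod (fun _ _ => norm_nonneg _) fun k hk => ?_)
    refine (norm_transferM_le_s16 _ (abs_pos.mp (hr_pos k hk))).trans
      (add_inv_le_mul_exp (hr_pos k hk) ?_)
    have hinv : |r k|⁻¹ ≤ t := inv_anti₀ (by positivity) (hr k (mem_range.mp hk))
    rw [← inv_pow]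
    nlinarith [pow_le_pow_left₀ (by positivity) hinv 2]
  have hlog := abs_log_sub_sum_log_le (range n) hr_pos hlower hupper
  rw [card_range] at hlog
  have hends : 0 ≤ log (|r (n - 1)| * |r 0|) :=
    log_nonneg (by nlinarith [hr (n - 1) (by omega), hr 0 (by omega)])
  calc _ = (1 / n : ℝ) * |log ‖P‖ - ∑ k ∈ range n, log (abs (r k))| := by
        rw [← mul_sub, abs_mul, abs_of_nonneg (by positivity)]
    _ ≤ (1 / n : ℝ) * (n * (4 * t ^ 2)) := by gcongr
    _ = 4 * t ^ 2 := by field_simp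
    _ ≤ _ := by nlinarith [mul_nonneg (by positivity : (0 : ℝ) ≤ 1 / n) hends]
end
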